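/- Fix β real with 0 < |β| < 1, γ = (1−β²)^{−1/2}, and x₁, x₂ ∈ ℝ. Let A(x; β, x₁, x₂) = 4·arctan(sinh(γ x₁)/(β cosh(γ(x+x₂)))) and Aₜ(x; β, x₁, x₂) = 4β²γ cosh(γ(x+x₂)) cosh(γ x₁)/(β² cosh²(γ(x+x₂)) + sinh²(γ x₁)), and write A′ = ∂ₓA, A_{t,1} = ∂_{x₁}Aₜ, A_{t,2} = ∂_{x₂}Aₜ. Then: (a) when x₂ = 0, the functions x ↦ Aₜ(x) and x ↦ A_{t,1}(x) are even, and the functions x ↦ A′(x) and x ↦ A_{t,2}(x) are odd; (b) for all x₁, x₂ ∈ ℝ, the products Aₜ·A′ and A_{t,1}·A_{t,2} are integrable over ℝ and ∫_ℝ Aₜ(x) A′(x) dx = 0 and ∫_ℝ A_{t,1}(x) A_{t,2}(x) dx = 0. -/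

import Mathlib

/-!
Substituting `u = x + x₂`, all four functions are rational in `cosh (γ u)`, `sinh (γ u)` with
denominator `β² cosh² (γ u) + sinh² (γ x₁)`, whose parity in `u` is read off directly; `Aₜ` and
`A_{t,1}` are even and `A′` and `A_{t,2}` are odd. Each of them is `O(sech (γ u))`, so both
products are `O(sech² (γ u)) = O((1 + γ² u²)⁻¹)` and integrable, and an integrable odd function
has vanishing integral. Translating back by `x₂` gives the integrals over `x`.
-/

open MeasureTheory Real

theorem Function.Odd.integral_eq_zero {G E : Type*} [MeasurableSpace G] [AddGroup G]
    [MeasurableNeg G] [NormedAddCommGroup E] [NormedSpace ℝ E] {μ : Measure G}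
    [μ.IsNegInvariant] {f : G → E} (hf : f.Odd) : ∫ x, f x ∂μ = 0 := by
  have h := integral_neg_eq_self f μ
  simp only [hf.eq, integral_neg] at h
  have h2 : (2 : ℝ) • ∫ x, f x ∂μ = 0 := by rw [two_smul]; nth_rw 1 [← h]; exact neg_add_cancel _
  exact (smul_eq_zero.mp h2).resolve_left two_ne_zero

lemma abs_sinh_le_cosh (t : ℝ) : |sinh t| ≤ cosh t :=
  abs_le.mpr ⟨by linarith [sinh_lt_cosh (-t), sinh_neg t, cosh_neg t], (sinh_lt_cosh t).le⟩

lemma one_add_sq_le_cosh_sq (t : ℝ) : 1 + t ^ 2 ≤ cosh t ^ 2 := by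
  have h : |t| ≤ |sinh t| := by
    rw [abs_sinh]; exact self_le_sinh_iff.mpr (abs_nonneg t)
  rw [cosh_sq']
  exact add_le_add_right (sq_le_sq.mpr h) 1

lemma integrable_of_abs_mul_cosh_sq_le {γ K : ℝ} (hγ : γ ≠ 0) {f : ℝ → ℝ}
    (hf : AEStronglyMeasurable f) (hK : ∀ u, |f u| * cosh (γ * u) ^ 2 ≤ K) : Integrable f := by
  refine ((integrable_inv_one_add_sq.comp_mul_left' hγ).const_mul K).mono' hf
    (Filter.Eventually.of_forall fun u => ?_)
  rw [Real.norm_eq_abs, ← div_eq_mul_inv, le_div_iff₀ (by positivity)]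
  calc |f u| * (1 + (γ * u) ^ 2) ≤ |f u| * cosh (γ * u) ^ 2 := by
        gcongr; exact one_add_sq_le_cosh_sq _
    _ ≤ K := hK u

def DecaysLikeSech (γ : ℝ) (f : ℝ → ℝ) : Prop := ∃ K, ∀ u, |f u| * cosh (γ * u) ≤ K

lemma DecaysLikeSech.integrable_mul {γ : ℝ} (hγ : γ ≠ 0) {f g : ℝ → ℝ}
    (hf : DecaysLikeSech γ f) (hg : DecaysLikeSech γ g) (hfm : Measurable f)
    (hgm : Measurable g) : Integrable (fun u => f u * g u) := by
  obtain ⟨K, hK⟩ := hf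
  obtain ⟨L, hL⟩ := hg
  have hK0 : 0 ≤ K := (mul_nonneg (abs_nonneg _) (cosh_pos _).le).trans (hK 0)
  refine integrable_of_abs_mul_cosh_sq_le hγ (hfm.mul hgm).aestronglyMeasurable
    (K := K * L) fun u => ?_
  calc |f u * g u| * cosh (γ * u) ^ 2 = (|f u| * cosh (γ * u)) * (|g u| * cosh (γ * u)) := by
        rw [abs_mul]; ring
    _ ≤ K * L := mul_le_mul (hK u) (hL u) (by positivity) hK0

lemma integral_mul_comp_add_eq_zero {f g : ℝ → ℝ} (hf : f.Even) (hg : g.Odd) (c : ℝ) :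
    ∫ x, f (x + c) * g (x + c) = 0 := by
  rw [integral_add_right_eq_self (fun u => f u * g u)]
  exact (hf.mul_odd hg).integral_eq_zero

noncomputable section

namespace KinkAntikink

variable (β γ : ℝ)

-- The profiles are functions of `u = x + x₂` and `y = x₁`; `A = profile`, `Aₜ = velocity`.
def den (u y : ℝ) : ℝ := β ^ 2 * cosh (γ * u) ^ 2 + sinh (γ * y) ^ 2

def profile (u y : ℝ) : ℝ := 4 * arctan (sinh (γ * y) / (β * cosh (γ * u)))

def velocity (u y : ℝ) : ℝ := 4 * β ^ 2 * γ * cosh (γ * u) * cosh (γ * y) / den β γ u y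

def profileDeriv (u y : ℝ) : ℝ := -4 * β * γ * sinh (γ * y) * sinh (γ * u) / den β γ u y

def velocityDerivCenter (u y : ℝ) : ℝ :=
  4 * β ^ 2 * γ ^ 2 * cosh (γ * y) * sinh (γ * u) * (sinh (γ * y) ^ 2 - β ^ 2 * cosh (γ * u) ^ 2)
    / den β γ u y ^ 2

def velocityDerivSep (u y : ℝ) : ℝ :=
  4 * β ^ 2 * γ ^ 2 * cosh (γ * u) * sinh (γ * y) * (den β γ u y - 2 * cosh (γ * y) ^ 2)
    / den β γ u y ^ 2

lemma sq_mul_cosh_sq_le_den (u y : ℝ) : β ^ 2 * cosh (γ * u) ^ 2 ≤ den β γ u y :=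
  le_add_of_nonneg_right (sq_nonneg _)

lemma den_neg (u y : ℝ) : den β γ (-u) y = den β γ u y := by simp [den]

lemma even_velocity (y : ℝ) : Function.Even (velocity β γ · y) := fun u => by
  simp [velocity, den_neg]

lemma odd_profileDeriv (y : ℝ) : Function.Odd (profileDeriv β γ · y) := fun u => by
  simp only [profileDeriv, den_neg, mul_neg, sinh_neg]; ring

lemma odd_velocityDerivCenter (y : ℝ) : Function.Odd (velocityDerivCenter β γ · y) := fun u => by
  simp only [velocityDerivCenter, den_neg, mul_neg, sinh_neg, cosh_neg]; ring

lemma even_velocityDerivSep (y : ℝ) : Function.Even (velocityDerivSep β γ · y) := fun u => by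
  simp [velocityDerivSep, den_neg]

variable {β}

lemma den_pos (hβ : β ≠ 0) (u y : ℝ) : 0 < den β γ u y := by unfold den; positivity

lemma hasDerivAt_profile (hβ : β ≠ 0) (u y : ℝ) :
    HasDerivAt (profile β γ · y) (profileDeriv β γ u y) u := by
  have hc : cosh (γ * u) ≠ 0 := (cosh_pos _).ne'
  have hD := (den_pos γ hβ u y).ne'
  have h := (((hasDerivAt_const u (sinh (γ * y))).fun_div
    ((hasDerivAt_const_mul γ).cosh.const_mul β) (mul_ne_zero hβ hc)).arctan).const_mul 4
  refine h.congr_deriv ?_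
  unfold profileDeriv den
  field_simp
  ring

lemma hasDerivAt_velocity_center (hβ : β ≠ 0) (u y : ℝ) :
    HasDerivAt (velocity β γ · y) (velocityDerivCenter β γ u y) u := by
  have hD := (den_pos γ hβ u y).ne'
  have hc := (hasDerivAt_const_mul γ (x := u)).cosh
  have h := ((hc.const_mul (4 * β ^ 2 * γ)).mul_const (cosh (γ * y))).fun_div
    (((hc.fun_pow 2).const_mul (β ^ 2)).add_const (sinh (γ * y) ^ 2)) hD
  refine h.congr_deriv ?_
  unfold velocityDerivCenter den
  field_simp
  ring

lemma hasDerivAt_velocity_sep (hβ : β ≠ 0) (u y : ℝ) :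
    HasDerivAt (velocity β γ u ·) (velocityDerivSep β γ u y) y := by
  have hD := (den_pos γ hβ u y).ne'
  have hl := hasDerivAt_const_mul γ (x := y)
  have h := (hl.cosh.const_mul (4 * β ^ 2 * γ * cosh (γ * u))).fun_div
    ((hl.sinh.fun_pow 2).const_add (β ^ 2 * cosh (γ * u) ^ 2)) hD
  refine h.congr_deriv ?_
  unfold velocityDerivSep den
  field_simp
  ring

lemma decaysLikeSech_velocity (hβ : β ≠ 0) (y : ℝ) : DecaysLikeSech γ (velocity β γ · y) := by
  refine ⟨4 * |γ| * cosh (γ * y), fun u => ?_⟩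
  have hD := den_pos γ hβ u y
  dsimp only
  rw [velocity, abs_div, abs_of_pos hD, div_mul_eq_mul_div, div_le_iff₀ hD]
  calc |4 * β ^ 2 * γ * cosh (γ * u) * cosh (γ * y)| * cosh (γ * u)
      = 4 * |γ| * cosh (γ * y) * (β ^ 2 * cosh (γ * u) ^ 2) := by
        simp only [abs_mul, abs_pow, sq_abs, abs_of_pos (cosh_pos _), Nat.abs_ofNat]; ring
    _ ≤ 4 * |γ| * cosh (γ * y) * den β γ u y := by gcongr; exact sq_mul_cosh_sq_le_den β γ u y

lemma decaysLikeSech_profileDeriv (hβ : β ≠ 0) (y : ℝ) :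
    DecaysLikeSech γ (profileDeriv β γ · y) := by
  refine ⟨4 * |γ| * |sinh (γ * y)| / |β|, fun u => ?_⟩
  have hD := den_pos γ hβ u y
  dsimp only
  rw [profileDeriv, abs_div, abs_of_pos hD, div_mul_eq_mul_div,
    div_le_div_iff₀ hD (abs_pos.mpr hβ)]
  calc |-4 * β * γ * sinh (γ * y) * sinh (γ * u)| * cosh (γ * u) * |β|
      = 4 * |γ| * |sinh (γ * y)| * (β ^ 2 * (|sinh (γ * u)| * cosh (γ * u))) := by
        simp only [abs_mul, abs_neg, Nat.abs_ofNat]; rw [← sq_abs β]; ring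
    _ ≤ 4 * |γ| * |sinh (γ * y)| * (β ^ 2 * cosh (γ * u) ^ 2) := by
        gcongr; rw [sq]; gcongr; exact abs_sinh_le_cosh _
    _ ≤ 4 * |γ| * |sinh (γ * y)| * den β γ u y := by
        gcongr; exact sq_mul_cosh_sq_le_den β γ u y

lemma decaysLikeSech_velocityDerivCenter (hβ : β ≠ 0) (y : ℝ) :
    DecaysLikeSech γ (velocityDerivCenter β γ · y) := by
  refine ⟨4 * γ ^ 2 * cosh (γ * y), fun u => ?_⟩
  have hD := den_pos γ hβ u y
  have hdiff : |sinh (γ * y) ^ 2 - β ^ 2 * cosh (γ * u) ^ 2| ≤ den β γ u y := by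
    rw [den, abs_le]
    constructor <;> nlinarith [sq_nonneg (sinh (γ * y)), sq_nonneg (β * cosh (γ * u))]
  dsimp only
  rw [velocityDerivCenter, abs_div, abs_of_pos (pow_pos hD 2), div_mul_eq_mul_div,
    div_le_iff₀ (pow_pos hD 2)]
  calc |4 * β ^ 2 * γ ^ 2 * cosh (γ * y) * sinh (γ * u)
          * (sinh (γ * y) ^ 2 - β ^ 2 * cosh (γ * u) ^ 2)| * cosh (γ * u)
      = 4 * γ ^ 2 * cosh (γ * y) * (β ^ 2 * (|sinh (γ * u)| * cosh (γ * u)))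
          * |sinh (γ * y) ^ 2 - β ^ 2 * cosh (γ * u) ^ 2| := by
        simp only [abs_mul, abs_pow, sq_abs, abs_of_pos (cosh_pos _), Nat.abs_ofNat]; ring
    _ ≤ 4 * γ ^ 2 * cosh (γ * y) * (β ^ 2 * cosh (γ * u) ^ 2) * den β γ u y := by
        gcongr
        · rw [sq]; gcongr; exact abs_sinh_le_cosh _
    _ ≤ 4 * γ ^ 2 * cosh (γ * y) * den β γ u y * den β γ u y := by
        gcongr; exact sq_mul_cosh_sq_le_den β γ u y
    _ = 4 * γ ^ 2 * cosh (γ * y) * den β γ u y ^ 2 := by ring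

lemma decaysLikeSech_velocityDerivSep (hβ : β ≠ 0) (y : ℝ) :
    DecaysLikeSech γ (velocityDerivSep β γ · y) := by
  refine ⟨4 * γ ^ 2 * |sinh (γ * y)| * (β ^ 2 + 2 * cosh (γ * y) ^ 2) / β ^ 2, fun u => ?_⟩
  have hD := den_pos γ hβ u y
  have hβD : β ^ 2 ≤ den β γ u y :=
    (le_mul_of_one_le_right (sq_nonneg β) (one_le_pow₀ (one_le_cosh _))).trans
      (sq_mul_cosh_sq_le_den β γ u y)
  have hdiff : |den β γ u y - 2 * cosh (γ * y) ^ 2| ≤ den β γ u y + 2 * cosh (γ * y) ^ 2 := by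
    rw [abs_le]; constructor <;> nlinarith [sq_nonneg (cosh (γ * y))]
  dsimp only
  rw [velocityDerivSep, abs_div, abs_of_pos (pow_pos hD 2), div_mul_eq_mul_div,
    div_le_div_iff₀ (pow_pos hD 2) (by positivity)]
  calc |4 * β ^ 2 * γ ^ 2 * cosh (γ * u) * sinh (γ * y)
          * (den β γ u y - 2 * cosh (γ * y) ^ 2)| * cosh (γ * u) * β ^ 2
      = 4 * γ ^ 2 * |sinh (γ * y)| * (β ^ 2 * cosh (γ * u) ^ 2)
          * (β ^ 2 * |den β γ u y - 2 * cosh (γ * y) ^ 2|) := by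
        simp only [abs_mul, abs_pow, sq_abs, abs_of_pos (cosh_pos _), Nat.abs_ofNat]; ring
    _ ≤ 4 * γ ^ 2 * |sinh (γ * y)| * den β γ u y
          * (β ^ 2 * den β γ u y + 2 * cosh (γ * y) ^ 2 * den β γ u y) := by
        gcongr
        · exact sq_mul_cosh_sq_le_den β γ u y
        · nlinarith [mul_le_mul_of_nonneg_left hdiff (sq_nonneg β), sq_nonneg (cosh (γ * y))]
    _ = 4 * γ ^ 2 * |sinh (γ * y)| * (β ^ 2 + 2 * cosh (γ * y) ^ 2) * den β γ u y ^ 2 := by ring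

lemma integrable_velocity_mul_profileDeriv (hβ : β ≠ 0) (hγ : γ ≠ 0) (y : ℝ) :
    Integrable (fun u => velocity β γ u y * profileDeriv β γ u y) :=
  (decaysLikeSech_velocity γ hβ y).integrable_mul hγ (decaysLikeSech_profileDeriv γ hβ y)
    (by unfold velocity den; fun_prop) (by unfold profileDeriv den; fun_prop)

lemma integrable_velocityDerivSep_mul_velocityDerivCenter (hβ : β ≠ 0) (hγ : γ ≠ 0) (y : ℝ) :
    Integrable (fun u => velocityDerivSep β γ u y * velocityDerivCenter β γ u y) :=
  (decaysLikeSech_velocityDerivSep γ hβ y).integrable_mul hγ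
    (decaysLikeSech_velocityDerivCenter γ hβ y) (by unfold velocityDerivSep den; fun_prop)
    (by unfold velocityDerivCenter den; fun_prop)

end KinkAntikink

end

open KinkAntikink in
/-- **Parity and orthogonality for the kink-antikink profile (Appendix B.2).**
For the kink-antikink profile `A(x;β,x₁,x₂)` and its time-derivative profile
`Aₜ(x;β,x₁,x₂)`: (a) when `x₂ = 0`, `x ↦ Aₜ` and `x ↦ ∂_{x₁}Aₜ` are even while
`x ↦ ∂ₓA` and `x ↦ ∂_{x₂}Aₜ` are odd; (b) for all `x₁, x₂`, the products `Aₜ·∂ₓA` and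
`∂_{x₁}Aₜ·∂_{x₂}Aₜ` are integrable over `ℝ` with vanishing integrals. -/
theorem kink_antikink_parity_orthogonality (β : ℝ) (hβ0 : 0 < |β|) (hβ1 : |β| < 1)
    (γ : ℝ) (hγ : γ = (1 - β ^ 2) ^ (-(1 / 2 : ℝ)))
    (A At : ℝ → ℝ → ℝ → ℝ)
    (hA : ∀ x y₁ y₂ : ℝ, A x y₁ y₂
      = 4 * Real.arctan (Real.sinh (γ * y₁) / (β * Real.cosh (γ * (x + y₂)))))
    (hAt : ∀ x y₁ y₂ : ℝ, At x y₁ y₂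
      = 4 * β ^ 2 * γ * Real.cosh (γ * (x + y₂)) * Real.cosh (γ * y₁)
          / (β ^ 2 * (Real.cosh (γ * (x + y₂))) ^ 2 + (Real.sinh (γ * y₁)) ^ 2)) :
    -- (a) parity at x₂ = 0
    (∀ x₁ x : ℝ, At (-x) x₁ 0 = At x x₁ 0) ∧
    (∀ x₁ x : ℝ, deriv (fun y₁ => At (-x) y₁ 0) x₁ = deriv (fun y₁ => At x y₁ 0) x₁) ∧
    (∀ x₁ x : ℝ, deriv (fun y => A y x₁ 0) (-x) = -deriv (fun y => A y x₁ 0) x) ∧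
    (∀ x₁ x : ℝ, deriv (fun y₂ => At (-x) x₁ y₂) 0 = -deriv (fun y₂ => At x x₁ y₂) 0) ∧
    -- (b) orthogonality for all shifts
    (∀ x₁ x₂ : ℝ,
      Integrable (fun x : ℝ => At x x₁ x₂ * deriv (fun y => A y x₁ x₂) x) ∧
      Integrable (fun x : ℝ =>
        deriv (fun y₁ => At x y₁ x₂) x₁ * deriv (fun y₂ => At x x₁ y₂) x₂) ∧
      (∫ x : ℝ, At x x₁ x₂ * deriv (fun y => A y x₁ x₂) x) = 0 ∧
      (∫ x : ℝ, deriv (fun y₁ => At x y₁ x₂) x₁ * deriv (fun y₂ => At x x₁ y₂) x₂) = 0) := by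
  have hβ : β ≠ 0 := abs_pos.mp hβ0
  have hγ0 : γ ≠ 0 := hγ ▸ (rpow_pos_of_pos (by nlinarith [sq_abs β]) _).ne'
  have hAt' : ∀ x y₁ y₂, At x y₁ y₂ = velocity β γ (x + y₂) y₁ := fun x y₁ y₂ => by
    rw [hAt]; rfl
  have hdA : ∀ x y₁ y₂, deriv (fun y => A y y₁ y₂) x = profileDeriv β γ (x + y₂) y₁ :=
    fun x y₁ y₂ => by
      simp_rw [hA]
      exact ((hasDerivAt_profile γ hβ (x + y₂) y₁).comp_add_const x y₂).deriv
  have hdAt₁ : ∀ x y₁ y₂, deriv (fun y => At x y y₂) y₁ = velocityDerivSep β γ (x + y₂) y₁ :=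
    fun x y₁ y₂ => by
      simp_rw [hAt']
      exact (hasDerivAt_velocity_sep γ hβ _ _).deriv
  have hdAt₂ : ∀ x y₁ y₂, deriv (fun y => At x y₁ y) y₂ = velocityDerivCenter β γ (x + y₂) y₁ :=
    fun x y₁ y₂ => by
      simp_rw [hAt']
      exact ((hasDerivAt_velocity_center γ hβ _ _).comp_const_add x y₂).deriv
  -- the derivatives must be rewritten before `At` is unfolded under the binders
  simp only [hdA, hdAt₁, hdAt₂]
  simp only [hAt', add_zero]
  exact ⟨even_velocity β γ, even_velocityDerivSep β γ, odd_profileDeriv β γ,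
    odd_velocityDerivCenter β γ, fun x₁ x₂ =>
      ⟨(integrable_velocity_mul_profileDeriv γ hβ hγ0 x₁).comp_add_right x₂,
        (integrable_velocityDerivSep_mul_velocityDerivCenter γ hβ hγ0 x₁).comp_add_right x₂,
        integral_mul_comp_add_eq_zero (even_velocity β γ x₁) (odd_profileDeriv β γ x₁) x₂,
        integral_mul_comp_add_eq_zero (even_velocityDerivSep β γ x₁)
          (odd_velocityDerivCenter β γ x₁) x₂⟩⟩
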